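/- Let G : Z → Z' be Lipschitz continuous with constant L > 0 and strongly monotone with constant m > 0. Then G is bijective and its inverse G⁻¹ : Z' → Z is strongly monotone with constant m/L², i.e. (f − g)(G⁻¹ f − G⁻¹ g) ≥ (m/L²)·‖f − g‖_{Z'}² for all f, g ∈ Z'. -/

import Mathlib

/-!
Strong monotonicity makes `G` injective. For surjectivity, transport `G` to `Z` by the Riesz
map `J`: solving `G z = f` means finding a fixed point of `z ↦ z - c • J (G z - f)`, and for
`c = m / L²` this map is a contraction with constant `√(1 - m² / L²)`, so Banach's fixed point
theorem applies. Finally, with `f = G w` and `g = G v`,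
`(f - g) (w - v) ≥ m ‖w - v‖² ≥ (m / L²) ‖f - g‖²` by the Lipschitz bound.
-/

open InnerProductSpace

section NormedSpace

variable {E : Type*} [NormedAddCommGroup E] [NormedSpace ℝ E] {G : E → StrongDual ℝ E}
  {L m : ℝ}

lemma injective_of_stronglyMonotone (hm : 0 < m)
    (hmono : ∀ w v : E, (G w - G v) (w - v) ≥ m * ‖w - v‖ ^ 2) : Function.Injective G := by
  intro w v h
  have hle := hmono w v
  rw [h, sub_self, zero_apply] at hle
  have hsq : ‖w - v‖ ^ 2 = 0 := le_antisymm (by nlinarith) (by positivity)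
  simpa [sub_eq_zero] using hsq

lemma div_sq_mul_norm_sub_sq_le_apply_sub (hL : 0 < L) (hm : 0 ≤ m) {w v : E}
    (hlip : ‖G w - G v‖ ≤ L * ‖w - v‖)
    (hmono : (G w - G v) (w - v) ≥ m * ‖w - v‖ ^ 2) :
    m / L ^ 2 * ‖G w - G v‖ ^ 2 ≤ (G w - G v) (w - v) :=
  calc m / L ^ 2 * ‖G w - G v‖ ^ 2 ≤ m / L ^ 2 * (L * ‖w - v‖) ^ 2 := by gcongr
    _ = m * ‖w - v‖ ^ 2 := by field_simp
    _ ≤ (G w - G v) (w - v) := hmono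

end NormedSpace

lemma contractingWith_of_norm_sub_sq_le {E : Type*} [NormedAddCommGroup E] {T : E → E}
    {q : ℝ} (hq : q < 1) (hT : ∀ w v, ‖T w - T v‖ ^ 2 ≤ q * ‖w - v‖ ^ 2) :
    ContractingWith (√q).toNNReal T := by
  refine ⟨Real.toNNReal_lt_one.2 ((Real.sqrt_lt' one_pos).2 (by simpa using hq)),
    LipschitzWith.of_dist_le' fun w v => ?_⟩
  rw [dist_eq_norm, dist_eq_norm, ← Real.sqrt_sq (norm_nonneg (T w - T v)),
    ← Real.sqrt_sq (norm_nonneg (w - v)), ← Real.sqrt_mul' q (sq_nonneg _)]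
  exact Real.sqrt_le_sqrt (hT w v)

section InnerProductSpace

variable {E : Type*} [NormedAddCommGroup E] [InnerProductSpace ℝ E] {G : E → StrongDual ℝ E}
  [CompleteSpace E] {L m c : ℝ}

lemma norm_sub_smul_toDual_symm_sq_le (hc : 0 ≤ c) {w v : E}
    (hlip : ‖G w - G v‖ ≤ L * ‖w - v‖)
    (hmono : (G w - G v) (w - v) ≥ m * ‖w - v‖ ^ 2) :
    ‖(w - v) - c • (toDual ℝ E).symm (G w - G v)‖ ^ 2
      ≤ (1 - 2 * c * m + c ^ 2 * L ^ 2) * ‖w - v‖ ^ 2 := by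
  have hinner :
      inner ℝ (w - v) (c • (toDual ℝ E).symm (G w - G v)) = c * (G w - G v) (w - v) := by
    rw [real_inner_smul_right, real_inner_comm, toDual_symm_apply]
  have hsq : ‖G w - G v‖ ^ 2 ≤ (L * ‖w - v‖) ^ 2 := by gcongr
  rw [norm_sub_sq_real, hinner, norm_smul, LinearIsometryEquiv.norm_map, Real.norm_of_nonneg hc]
  nlinarith [mul_le_mul_of_nonneg_left hsq (sq_nonneg c), mul_le_mul_of_nonneg_left hmono hc]

lemma surjective_of_lipschitz_of_stronglyMonotone (hL : 0 < L) (hm : 0 < m)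
    (hlip : ∀ w v : E, ‖G w - G v‖ ≤ L * ‖w - v‖)
    (hmono : ∀ w v : E, (G w - G v) (w - v) ≥ m * ‖w - v‖ ^ 2) : Function.Surjective G := by
  intro f
  set c := m / L ^ 2
  set T : E → E := fun z => z - c • (toDual ℝ E).symm (G z - f)
  have hc : 0 < c := by positivity
  have hrate : 1 - 2 * c * m + c ^ 2 * L ^ 2 = 1 - m ^ 2 / L ^ 2 := by
    simp only [c]
    field_simp
    ring
  have hT : ContractingWith (√(1 - m ^ 2 / L ^ 2)).toNNReal T := by
    have hrate_lt : 1 - m ^ 2 / L ^ 2 < 1 := sub_lt_self 1 (by positivity)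
    refine contractingWith_of_norm_sub_sq_le hrate_lt fun w v => ?_
    have hdiff : T w - T v = (w - v) - c • (toDual ℝ E).symm (G w - G v) := by
      simp only [T, map_sub, smul_sub]
      abel
    rw [hdiff, ← hrate]
    exact norm_sub_smul_toDual_symm_sq_le hc.le (hlip w v) (hmono w v)
  have : Nonempty E := ⟨0⟩
  refine ⟨ContractingWith.fixedPoint T hT, ?_⟩
  have hfix : T (ContractingWith.fixedPoint T hT) = ContractingWith.fixedPoint T hT :=
    hT.fixedPoint_isFixedPt
  simpa [T, hc.ne', sub_eq_zero] using hfix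

end InnerProductSpace

/-- A Lipschitz continuous and strongly monotone operator `G : Z → Z'` on a real
Hilbert space `Z` is bijective, with inverse that is strongly monotone with
constant `m/L²`. -/
theorem lipschitz_stronglyMonotone_inverse_stronglyMonotone
    {Z : Type*} [NormedAddCommGroup Z] [InnerProductSpace ℝ Z] [CompleteSpace Z]
    (G : Z → StrongDual ℝ Z) (L m : ℝ) (hL : 0 < L) (hm : 0 < m)
    (hlip : ∀ w v : Z, ‖G w - G v‖ ≤ L * ‖w - v‖)
    (hmono : ∀ w v : Z, (G w - G v) (w - v) ≥ m * ‖w - v‖ ^ 2) :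
    Function.Bijective G ∧
      ∀ f g : StrongDual ℝ Z,
        (f - g) (Function.invFun G f - Function.invFun G g) ≥ (m / L ^ 2) * ‖f - g‖ ^ 2 := by
  have hinj := injective_of_stronglyMonotone hm hmono
  have hsurj := surjective_of_lipschitz_of_stronglyMonotone hL hm hlip hmono
  refine ⟨⟨hinj, hsurj⟩, fun f g => ?_⟩
  obtain ⟨w, rfl⟩ := hsurj f
  obtain ⟨v, rfl⟩ := hsurj g
  rw [Function.leftInverse_invFun hinj w, Function.leftInverse_invFun hinj v]
  exact div_sq_mul_norm_sub_sq_le_apply_sub hL hm.le (hlip w v) (hmono w v)
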